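/- Let R → S be a homomorphism of commutative Noetherian rings of prime characteristic p such that R_red and S_red are F-finite. Let M be an S-module and L an R-module. Then Σ_{e ≥ 0} Σ_{φ} φ( ^e(M_{*S}) ) ⊆ L_{*R}, where for each e the inner sum ranges over all R-linear maps φ : ^eM → L (with ^eM formed over S and regarded as an R-module via R → S). -/

import Mathlib

open scoped TensorProduct Pointwise

universe u v w

/-- `R°`: the set of elements of `R` not contained in any minimal prime. -/
def RCirc (R : Type u) [CommRing R] : Set R :=
  {c | ∀ P ∈ minimalPrimes R, c ∉ P}

/-- An additive map `g : M →+ N` between `R`-modules is `e`-th Frobenius semilinear if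
`g (r ^ (p ^ e) • x) = r • g x`; these are exactly the `R`-linear maps `{}^e M → N`. -/
def IsFrobSemilinear (p e : ℕ) (R : Type u) [CommRing R] {M : Type v} {N : Type w}
    [AddCommGroup M] [Module R M] [AddCommGroup N] [Module R N] (g : M →+ N) : Prop :=
  ∀ (r : R) (x : M), g ((r ^ p ^ e) • x) = r • g x

/-- `M_*[c, p^{e₀}]`: the submodule generated by all `g ({}^e c)` for `e ≥ e₀` and
`g ∈ Hom_R({}^e R, M)`. -/
def tiAux (p : ℕ) (R : Type u) [CommRing R] (M : Type v) [AddCommGroup M] [Module R M]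
    (c : R) (e₀ : ℕ) : Submodule R M :=
  Submodule.span R {x : M | ∃ e : ℕ, e₀ ≤ e ∧ ∃ g : R →+ M, IsFrobSemilinear p e R g ∧ x = g c}

/-- The tight interior `M_{*R}`. -/
def tightInterior (p : ℕ) (R : Type u) [CommRing R] (M : Type v) [AddCommGroup M]
    [Module R M] : Submodule R M :=
  ⨅ c ∈ RCirc R, ⨅ e₀ : ℕ, tiAux p R M c e₀

/-- `R` is `F`-finite: `{}^1 R` is a finitely generated `R`-module. -/
def FFinite (p : ℕ) (R : Type u) [CommRing R] : Prop :=
  ∃ s : Finset R, ∀ x : R, ∃ c : R → R, x = ∑ y ∈ s, c y ^ p * y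

/-- `c` is a co-test element: `c ∈ R°` and `M_* = M_*[c, 1]` for every `R`-module `M`. -/
def IsCoTestElement (p : ℕ) (R : Type u) [CommRing R] (c : R) : Prop :=
  c ∈ RCirc R ∧
    ∀ (M : Type v) [AddCommGroup M] [Module R M], tightInterior p R M = tiAux p R M c 0

/-- Strong `F`-regularity: for every `c ∈ R°` some `R`-linear `φ : {}^e R → R` sends `{}^e c`
to `1`. -/
def StronglyFRegular (p : ℕ) (R : Type u) [CommRing R] : Prop :=
  ∀ c ∈ RCirc R, ∃ (e : ℕ) (g : R →+ R), IsFrobSemilinear p e R g ∧ g c = 1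

/-- `R` is `F`-coregular if `M_* = M` for every `R`-module `M`. -/
def FCoregular (p : ℕ) (R : Type u) [CommRing R] : Prop :=
  ∀ (M : Type v) [AddCommGroup M] [Module R M], tightInterior p R M = ⊤

/-- `{}^e R`: the ring `R` viewed as an `R`-module via the `e`-th iterate of Frobenius. -/
def FrobAlg (_p _e : ℕ) (R : Type u) : Type u := R

instance (p e : ℕ) (R : Type u) [CommRing R] : AddCommGroup (FrobAlg p e R) :=
  inferInstanceAs (AddCommGroup R)

noncomputable instance (p e : ℕ) (R : Type u) [CommRing R] [ExpChar R p] :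
    Module R (FrobAlg p e R) :=
  Module.compHom R (iterateFrobenius R p e)

/-- The tight closure of zero in `N`: those `z` such that for some `c ∈ R°`,
`{}^e c ⊗ z = 0` in `{}^e R ⊗_R N` for all `e ≥ 0`. -/
def zeroTC (p : ℕ) (R : Type u) [CommRing R] [Fact p.Prime] [CharP R p]
    (N : Type v) [AddCommGroup N] [Module R N] : Set N :=
  {z | ∃ c ∈ RCirc R, ∀ e : ℕ,
    ((show FrobAlg p e R from c) ⊗ₜ[R] z : TensorProduct R (FrobAlg p e R) N) = 0}

/-- The big test ideal `τ_b(R) = ⋂_N Ann_R (0*_N)`. -/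
def bigTestIdeal (p : ℕ) (R : Type u) [CommRing R] [Fact p.Prime] [CharP R p] : Set R :=
  {r | ∀ (N : Type v) [AddCommGroup N] [Module R N], ∀ z ∈ zeroTC p R N, r • z = 0}

/-- `Hom_R(S, M)` is an `S`-module via the action of `S` on the source:
`(s • f) x = f (s * x)`. -/
instance homSourceModule (R : Type u) [CommRing R] (S : Type v) [CommRing S] [Algebra R S]
    (M : Type w) [AddCommGroup M] [Module R M] : Module S (S →ₗ[R] M) where
  smul s f := f ∘ₗ LinearMap.mulLeft R s
  one_smul f := LinearMap.ext fun x => show f (1 * x) = f x by rw [one_mul]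
  mul_smul s t f := LinearMap.ext fun x =>
    show f (s * t * x) = f (t * (s * x)) by rw [show s * t * x = t * (s * x) by ring]
  smul_zero s := rfl
  smul_add s f g := rfl
  add_smul s t f := LinearMap.ext fun x =>
    show f ((s + t) * x) = f (s * x) + f (t * x) by rw [add_mul, map_add]
  zero_smul f := LinearMap.ext fun x => show f (0 * x) = 0 by rw [zero_mul, map_zero]

@[simp] lemma homSourceModule_smul_apply {R : Type u} [CommRing R] {S : Type v} [CommRing S]
    [Algebra R S] {M : Type w} [AddCommGroup M] [Module R M] (s : S) (f : S →ₗ[R] M) (x : S) :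
    (s • f) x = f (s * x) := rfl

/-- Post-composition `Hom_R(S, V) → Hom_R(S, W)` with an `R`-linear map `β : V → W`,
as an `S`-linear map for the source `S`-actions. -/
def homComp (R : Type u) [CommRing R] (S : Type v) [CommRing S] [Algebra R S]
    {V : Type*} {W : Type*} [AddCommGroup V] [Module R V] [AddCommGroup W] [Module R W]
    (β : V →ₗ[R] W) : (S →ₗ[R] V) →ₗ[S] (S →ₗ[R] W) where
  toFun f := β ∘ₗ f
  map_add' f g := LinearMap.ext fun x => by simp
  map_smul' s f := rfl

/-- `{}^e M`: the module `M` with `R`-action twisted by the `e`-th iterate of Frobenius. -/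
def FrobM (_p _e : ℕ) (R : Type u) (M : Type v) : Type v := M

instance (p e : ℕ) (R : Type u) (M : Type v) [AddCommGroup M] :
    AddCommGroup (FrobM p e R M) :=
  inferInstanceAs (AddCommGroup M)

noncomputable instance (p e : ℕ) (R : Type u) (M : Type v) [CommRing R] [ExpChar R p]
    [AddCommGroup M] [Module R M] : Module R (FrobM p e R M) :=
  Module.compHom M (iterateFrobenius R p e)

/-- For `R → S` and an `S`-module `M`, an additive map `g : M →+ L` to an `R`-module `L` is
`R`-linear as a map `{}^e M → L` (with `{}^e M` formed over `S` and restricted to `R`) iff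
`g (((algebraMap R S) r) ^ (p ^ e) • x) = r • g x`. -/
def IsFrobSemilinearAlg (p e : ℕ) (R : Type u) (S : Type v) [CommRing R] [CommRing S]
    [Algebra R S] (M : Type w) (L : Type*) [AddCommGroup M] [Module S M]
    [AddCommGroup L] [Module R L] (g : M →+ L) : Prop :=
  ∀ (r : R) (x : M), g ((algebraMap R S r ^ p ^ e) • x) = r • g x

/-- The natural map `S ⊗_R {}^e R → {}^e S`, `s ⊗ {}^e r ↦ {}^e (s^{p^e} · rS)`, on underlying
additive groups. -/
noncomputable def frobBC (p e : ℕ) (R : Type u) (S : Type v) [CommRing R] [CommRing S]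
    [Algebra R S] [Fact p.Prime] [CharP R p] [CharP S p] :
    TensorProduct R S (FrobAlg p e R) →+ S :=
  TensorProduct.liftAddHom
    { toFun := fun s =>
        { toFun := fun r => s ^ p ^ e * algebraMap R S r
          map_zero' := by
            show s ^ p ^ e * algebraMap R S (0 : R) = 0
            simp
          map_add' := fun a b => by
            show s ^ p ^ e * algebraMap R S (a + b) = _
            exact (congrArg (s ^ p ^ e * ·) (map_add (algebraMap R S) (a : R) (b : R))).trans
              (mul_add _ _ _) }
      map_zero' := by
        ext r
        show (0 : S) ^ p ^ e * algebraMap R S r = 0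
        rw [zero_pow (pow_ne_zero e (Fact.out : p.Prime).ne_zero), zero_mul]
      map_add' := fun s t => by
        ext r
        show (s + t) ^ p ^ e * algebraMap R S r = _
        rw [add_pow_char_pow, add_mul]
        rfl }
    (fun r s x => by
      show (r • s) ^ p ^ e * algebraMap R S (show R from x)
          = s ^ p ^ e * algebraMap R S (r ^ p ^ e * (show R from x))
      rw [Algebra.smul_def, mul_pow, map_mul, map_pow]
      ring)

/-!
Fix `c ∈ R°` and `e₀`. It suffices to find an `R`-linear map `ψ : {}^Λ R → {}^E S` with
`Λ ≥ e₀` and `ψ c ∈ S°`: for every `S`-linear `h : {}^{e'} S → M` with `e' ≥ E - e`, the map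
`r ↦ g (s • h (ψ r))` is `R`-linear `{}^{Λ + e + e' - E} R → L`, so `g` carries
`M_*[ψ c, p^{E - e}]` into `L_*[c, p^{e₀}]`.

Such a `ψ` is `∑_Q u_Q χ_Q^{p^{k_Q}}` over the finitely many minimal primes `Q` of `S`, where
`u_Q` lies in every minimal prime except `Q` and `χ_Q : {}^{Λ_Q} R → {}^{E_Q} S` has `χ_Q c ∉ Q`.
To build `χ_Q`, let `𝔭 = Q ∩ R`. Krull's intersection theorem in `R_𝔭` gives `Λ` for which `c`
is torsion-free in `{}^Λ R ⊗ R/𝔭 = R/𝔭^{[p^Λ]}` over `R/𝔭`, hence a functional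
`{}^Λ R → Frac(R/𝔭)` sending `c` to `1`. Since `Q S_Q` is nilpotent, `r ↦ r^{p^E}` induces
`Frac(R/𝔭) → S_Q`, and we get a map `{}^Λ R → {}^E S_Q` with `c ↦ 1`. As `R_red` is F-finite and
`R` is Noetherian, `{}^Λ R` is a finitely presented `R`-module, so this map lifts to `{}^E S`
after multiplication by an element outside `Q`.
-/

theorem exists_mul_notMem_pow_of_mem_rCirc {R : Type*} [CommRing R] [IsNoetherianRing R]
    (𝔭 : Ideal R) [𝔭.IsPrime] {c : R} (hc : c ∈ RCirc R) : ∃ n, ∀ s ∉ 𝔭, s * c ∉ 𝔭 ^ n := by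
  set Rₚ := Localization.AtPrime 𝔭
  have hc₀ : algebraMap R Rₚ c ≠ 0 := by
    rw [Ne, IsLocalization.map_eq_zero_iff 𝔭.primeCompl]
    rintro ⟨m, hm⟩
    obtain ⟨q, hq, hq𝔭⟩ := Ideal.exists_minimalPrimes_le (bot_le : ⊥ ≤ 𝔭)
    have := hq.1.1.mem_or_mem (hm ▸ q.zero_mem)
    exact this.elim (fun h => m.2 (hq𝔭 h)) (hc q hq)
  obtain ⟨n, hn⟩ : ∃ n, algebraMap R Rₚ c ∉ IsLocalRing.maximalIdeal Rₚ ^ n := by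
    by_contra! h
    have hmem : algebraMap R Rₚ c ∈ ⨅ i, IsLocalRing.maximalIdeal Rₚ ^ i :=
      Submodule.mem_iInf _ |>.mpr h
    rw [Ideal.iInf_pow_eq_bot_of_isLocalRing _ (IsLocalRing.maximalIdeal.isMaximal Rₚ).ne_top]
      at hmem
    exact hc₀ hmem
  refine ⟨n, fun s hs hsc => hn ?_⟩
  have := Ideal.mem_map_of_mem (algebraMap R Rₚ) hsc
  rwa [Ideal.map_pow, Localization.AtPrime.map_eq_maximalIdeal, map_mul,
    Ideal.unit_mul_mem_iff_mem _ (IsLocalization.map_units Rₚ (⟨s, hs⟩ : 𝔭.primeCompl))] at this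

theorem exists_linearMap_fractionRing_eq_one {D A : Type*} [CommRing D] [IsDomain D]
    [AddCommGroup A] [Module D A] {ω : A} (hω : ∀ d : D, d ≠ 0 → d • ω ≠ 0) :
    ∃ φ : A →ₗ[D] FractionRing D, φ ω = 1 := by
  set K := FractionRing D
  let f := LocalizedModule.mkLinearMap (nonZeroDivisors D) A
  have hf : f ω ≠ 0 := fun h => by
    obtain ⟨d, hd⟩ := (IsLocalizedModule.eq_zero_iff (nonZeroDivisors D) f).mp h
    exact hω d (nonZeroDivisors.ne_zero d.2) hd
  obtain ⟨φ, hφ⟩ : ∃ φ : Module.Dual K (LocalizedModule (nonZeroDivisors D) A), φ (f ω) ≠ 0 := by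
    by_contra! h
    exact hf ((Module.forall_dual_apply_eq_zero_iff K _).mp h)
  exact ⟨(((φ (f ω))⁻¹ • φ).restrictScalars D) ∘ₗ f, by simp [inv_mul_cancel₀ hφ]⟩

theorem exists_pow_eq_zero_of_mem_minimalPrimes {S : Type*} [CommRing S] [IsNoetherianRing S]
    {Q : Ideal S} [Q.IsPrime] (hQ : Q ∈ minimalPrimes S) :
    ∃ N, ∀ x ∈ Q, algebraMap S (Localization.AtPrime Q) x ^ N = 0 := by
  obtain ⟨N, hN⟩ := IsNoetherianRing.isNilpotent_nilradical (Localization.AtPrime Q)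
  have hQ' : Q.map (algebraMap S (Localization.AtPrime Q)) = nilradical _ := by
    rw [← IsLocalization.AtPrime.radical_map_of_mem_minimalPrimes _ Q ⊥ hQ, Ideal.map_bot]
    rfl
  refine ⟨N, fun x hx => ?_⟩
  have := Ideal.pow_mem_pow (hQ' ▸ Ideal.mem_map_of_mem _ hx) N
  rwa [hN, Submodule.zero_eq_bot, Ideal.mem_bot] at this

theorem exists_notMem_forall_mem_of_mem_minimalPrimes {S : Type*} [CommRing S]
    [IsNoetherianRing S] {Q : Ideal S} (hQ : Q ∈ minimalPrimes S) :
    ∃ u ∉ Q, ∀ Q' ∈ minimalPrimes S, Q' ≠ Q → u ∈ Q' := by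
  classical
  set F := (minimalPrimes.finite_of_isNoetherianRing S).toFinset
  have hF : ∀ {Q'}, Q' ∈ F ↔ Q' ∈ minimalPrimes S := Set.Finite.mem_toFinset _
  have : ¬ (F.erase Q).inf id ≤ Q := by
    rw [hQ.1.1.inf_le']
    rintro ⟨Q', hQ', hle⟩
    exact Finset.ne_of_mem_erase hQ'
      (le_antisymm hle (hQ.2 ⟨(hF.mp (Finset.mem_of_mem_erase hQ')).1.1, bot_le⟩ hle))
  obtain ⟨u, hu, huQ⟩ := SetLike.not_le_iff_exists.mp this
  exact ⟨u, huQ, fun Q' hQ' hne =>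
    Finset.inf_le (f := id) (Finset.mem_erase.mpr ⟨hne, hF.mpr hQ'⟩) hu⟩

/-- `ψ` is an `R`-linear map `{}^Λ R → {}^E T`. -/
def IsFrobLinear (p Λ E : ℕ) {R T : Type*} [CommRing R] [CommRing T] [Algebra R T]
    (ψ : R →+ T) : Prop :=
  ∀ r' r : R, ψ (r' ^ p ^ Λ * r) = algebraMap R T r' ^ p ^ E * ψ r

namespace IsFrobLinear

variable {p Λ E : ℕ} {R T : Type*} [CommRing R] [CommRing T] [Algebra R T] {ψ : R →+ T}

theorem shift (h : IsFrobLinear p Λ E ψ) (t : ℕ) : IsFrobLinear p (Λ + t) (E + t) ψ := by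
  intro r' r
  rw [pow_add, pow_mul', h, map_pow, ← pow_mul, ← pow_add, add_comm t]

theorem frobenius_comp [ExpChar T p] (h : IsFrobLinear p Λ E ψ) (t : ℕ) :
    IsFrobLinear p Λ (E + t) ((iterateFrobenius T p t : T →+ T).comp ψ) := by
  intro r' r
  simp only [AddMonoidHom.coe_comp, Function.comp_apply, AddMonoidHom.coe_coe,
    iterateFrobenius_def]
  rw [h, mul_pow, ← pow_mul, ← pow_add]

theorem mulLeft (h : IsFrobLinear p Λ E ψ) (u : T) :
    IsFrobLinear p Λ E ((AddMonoidHom.mulLeft u).comp ψ) := by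
  intro r' r
  simp only [AddMonoidHom.coe_comp, Function.comp_apply, AddMonoidHom.coe_mulLeft]
  rw [h]
  ring

theorem sum {ι : Type*} (s : Finset ι) {ψ : ι → R →+ T}
    (h : ∀ i ∈ s, IsFrobLinear p Λ E (ψ i)) : IsFrobLinear p Λ E (∑ i ∈ s, ψ i) := by
  intro r' r
  simp only [AddMonoidHom.finsetSum_apply, Finset.mul_sum]
  exact Finset.sum_congr rfl fun i hi => h i hi r' r

theorem ringHom_comp {T' : Type*} [CommRing T'] [Algebra R T'] (h : IsFrobLinear p Λ E ψ)
    (θ : T →+* T') {E' : ℕ} (hθ : ∀ r, θ (algebraMap R T r) = algebraMap R T' r ^ p ^ E') :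
    IsFrobLinear p Λ (E' + E) ((θ : T →+ T').comp ψ) := by
  intro r' r
  simp only [AddMonoidHom.coe_comp, Function.comp_apply, AddMonoidHom.coe_coe]
  rw [h, map_mul, map_pow, hθ, ← pow_mul, ← pow_add]

theorem exists_frobenius_comp [ExpChar T p] (h : IsFrobLinear p Λ E ψ) {Λ' E' : ℕ}
    (hΛ : Λ ≤ Λ') (hE : E + (Λ' - Λ) ≤ E') :
    ∃ k, IsFrobLinear p Λ' E' ((iterateFrobenius T p k : T →+ T).comp ψ) := by
  refine ⟨E' - (E + (Λ' - Λ)), ?_⟩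
  have h' := (h.shift (Λ' - Λ)).frobenius_comp (E' - (E + (Λ' - Λ)))
  rwa [Nat.add_sub_cancel' hΛ, Nat.add_sub_cancel' hE] at h'

end IsFrobLinear

section Transfer

variable {p e Λ E : ℕ} {R : Type u} {S : Type v} [CommRing R] [CommRing S] [Algebra R S]
  {M : Type w} [AddCommGroup M] [Module S M] {L : Type*} [AddCommGroup L] [Module R L]
  {g : M →+ L} {ψ : R →+ S}

theorem IsFrobSemilinear.smul_comp {e' : ℕ} {h : S →+ M} (hh : IsFrobSemilinear p e' S h)
    (s : S) : IsFrobSemilinear p e' S ((DistribSMul.toAddMonoidHom M s).comp h) := by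
  intro r x
  simp only [AddMonoidHom.coe_comp, Function.comp_apply, DistribSMul.toAddMonoidHom_apply,
    hh r x, smul_comm s r]

theorem IsFrobLinear.isFrobSemilinear_comp (hψ : IsFrobLinear p Λ E ψ)
    (hg : IsFrobSemilinearAlg p e R S M L g) {e' : ℕ} {h : S →+ M}
    (hh : IsFrobSemilinear p e' S h) (hE : E ≤ e + e') :
    IsFrobSemilinear p (Λ + (e + e' - E)) R (g.comp (h.comp ψ)) := by
  intro r' r
  simp only [AddMonoidHom.coe_comp, Function.comp_apply, smul_eq_mul]
  rw [hψ.shift _ r' r, Nat.add_sub_cancel' hE, pow_add, pow_mul, ← smul_eq_mul, hh, hg]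

theorem map_mem_tiAux_of_isFrobLinear (hg : IsFrobSemilinearAlg p e R S M L g)
    (hψ : IsFrobLinear p Λ E ψ) {c : R} {e₀ e₁ : ℕ} (hΛ : e₀ ≤ Λ) (hE : E ≤ e + e₁) {x : M}
    (hx : x ∈ tiAux p S M (ψ c) e₁) : g x ∈ tiAux p R L c e₀ := by
  suffices ∀ s : S, g (s • x) ∈ tiAux p R L c e₀ by simpa using this 1
  induction hx using Submodule.span_induction with
  | mem z hz =>
    obtain ⟨e', he', h, hh, rfl⟩ := hz
    intro s
    exact Submodule.subset_span ⟨_, le_add_right hΛ, _,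
      hψ.isFrobSemilinear_comp hg (IsFrobSemilinear.smul_comp hh s) (by omega), rfl⟩
  | zero => simp
  | add _ _ _ _ h₁ h₂ =>
    intro s
    rw [smul_add, map_add]
    exact add_mem (h₁ s) (h₂ s)
  | smul t _ _ h =>
    intro s
    rw [smul_smul]
    exact h (s * t)

end Transfer

section FrobSum

variable {p Λ E : ℕ} {R S : Type*} [CommRing R] [CommRing S] [Algebra R S] {ι : Type*} [Fintype ι]

/-- The `R`-linear combination `∑ⱼ uⱼ • yⱼ` in `{}^E S`. -/
def frobSum (p E : ℕ) (u : ι → R) (y : ι → S) : S :=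
  ∑ j, algebraMap R S (u j) ^ p ^ E * y j

theorem frobSum_mul_left (s : S) (u : ι → R) (y : ι → S) :
    frobSum p E u (fun j => s * y j) = s * frobSum p E u y := by
  simp only [frobSum, Finset.mul_sum]
  exact Finset.sum_congr rfl fun j _ => by ring

theorem frobM_smul_def [ExpChar R p] (r : R) (x : S) :
    HSMul.hSMul (β := FrobM p E R S) (γ := FrobM p E R S) r x = algebraMap R S r ^ p ^ E * x := by
  rw [← map_pow, ← Algebra.smul_def, ← iterateFrobenius_def]
  rfl

theorem linearCombination_frobM_apply [ExpChar R p] (y : ι → S) (u : ι → R) :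
    Fintype.linearCombination R (M := FrobM p E R S) y u = frobSum p E u y :=
  (Fintype.linearCombination_apply R _ u).trans
    (Finset.sum_congr rfl fun j _ => frobM_smul_def (u j) (y j))

theorem IsFrobLinear.map_frobSum {T : Type*} [CommRing T] [Algebra R T] {ψ : R →+ T}
    (h : IsFrobLinear p Λ E ψ) (u b : ι → R) :
    ψ (frobSum p Λ u b) = frobSum p E u (fun j => ψ (b j)) := by
  simp only [frobSum, map_sum, Algebra.algebraMap_self, RingHom.id_apply]
  exact Finset.sum_congr rfl fun j _ => h (u j) (b j)

end FrobSum

section FrobFiniteMod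

/-- `{}^Λ R / I` is a finitely generated `R`-module. -/
def FrobFiniteMod (p Λ : ℕ) (R : Type u) [CommRing R] (I : Ideal R) : Prop :=
  ∃ (ι : Type u) (_ : Fintype ι) (b : ι → R), ∀ x : R, ∃ a : ι → R, x - ∑ j, a j ^ p ^ Λ * b j ∈ I

variable {p Λ : ℕ} {R : Type u} [CommRing R]

theorem frobFiniteMod_of_fFinite {I : Ideal R} (h : FFinite p (R ⧸ I)) : FrobFiniteMod p 1 R I := by
  obtain ⟨s, hs⟩ := h
  choose w hw using fun y : R ⧸ I => Ideal.Quotient.mk_surjective y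
  refine ⟨s, inferInstance, fun y => w y, fun x => ?_⟩
  obtain ⟨a, ha⟩ := hs (Ideal.Quotient.mk I x)
  refine ⟨fun y => w (a y), ?_⟩
  rw [← Ideal.Quotient.eq_zero_iff_mem, map_sub, map_sum, sub_eq_zero, ha,
    ← Finset.sum_coe_sort s]
  simp [hw]

theorem FrobFiniteMod.pow [IsNoetherianRing R] {I : Ideal R} (h : FrobFiniteMod p Λ R I) :
    ∀ k, FrobFiniteMod p Λ R (I ^ k)
  | 0 => ⟨PUnit, inferInstance, fun _ => 0, fun x => ⟨0, by simp⟩⟩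
  | k + 1 => by
    obtain ⟨ι, _, b, hb⟩ := h.pow k
    obtain ⟨κ, _, y, hy⟩ := h
    obtain ⟨G, hG⟩ := IsNoetherian.noetherian (I ^ k)
    refine ⟨ι ⊕ (G × κ), inferInstance, Sum.elim b fun z => y z.2 * z.1, fun x => ?_⟩
    obtain ⟨a, ha⟩ := hb x
    obtain ⟨f, -, hf⟩ := Submodule.mem_span_finset.mp (hG ▸ ha)
    choose a' ha' using fun g : G => hy (f g)
    refine ⟨Sum.elim a fun z => a' z.1 z.2, ?_⟩
    have hdecomp : x - ∑ z, Sum.elim a (fun z : G × κ => a' z.1 z.2) z ^ p ^ Λ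
          * Sum.elim b (fun z : G × κ => y z.2 * z.1) z
        = ∑ g : G, (f g - ∑ j, a' g j ^ p ^ Λ * y j) * g := by
      simp only [Fintype.sum_sum_type, Fintype.sum_prod_type, Sum.elim_inl, Sum.elim_inr,
        sub_mul, Finset.sum_sub_distrib, Finset.sum_mul, mul_assoc]
      rw [Finset.sum_coe_sort G fun g => f g * g]
      simp only [smul_eq_mul] at hf
      rw [hf]
      ring
    rw [hdecomp, pow_succ']
    exact Ideal.sum_mem _ fun g _ =>
      Ideal.mul_mem_mul (ha' g) (hG ▸ Submodule.subset_span g.2)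

theorem FrobFiniteMod.of_isNilpotent [IsNoetherianRing R] {I : Ideal R} (hI : IsNilpotent I)
    (h : FrobFiniteMod p Λ R I) : FrobFiniteMod p Λ R ⊥ := by
  obtain ⟨n, hn⟩ := hI
  simpa [hn] using h.pow n

theorem FrobFiniteMod.add [ExpChar R p] {Λ' : ℕ} (h : FrobFiniteMod p Λ R ⊥)
    (h' : FrobFiniteMod p Λ' R ⊥) : FrobFiniteMod p (Λ + Λ') R ⊥ := by
  obtain ⟨κ, _, y, hy⟩ := h
  obtain ⟨ι, _, b, hb⟩ := h'
  refine ⟨κ × ι, inferInstance, fun z => y z.1 ^ p ^ Λ' * b z.2, fun x => ?_⟩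
  obtain ⟨a, ha⟩ := hb x
  choose d hd using fun j => hy (a j)
  simp only [Submodule.mem_bot, sub_eq_zero] at ha hd
  refine ⟨fun z => d z.2 z.1, ?_⟩
  rw [Submodule.mem_bot, sub_eq_zero, ha, Fintype.sum_prod_type, Finset.sum_comm]
  refine Finset.sum_congr rfl fun j _ => ?_
  rw [hd j, ← iterateFrobenius_def, map_sum, Finset.sum_mul]
  refine Finset.sum_congr rfl fun i _ => ?_
  rw [iterateFrobenius_def, mul_pow, ← pow_mul, ← pow_add]
  ring

theorem frobFiniteMod_bot_of_fFinite [IsNoetherianRing R] [ExpChar R p]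
    (h : FFinite p (R ⧸ nilradical R)) : ∀ Λ, FrobFiniteMod p Λ R ⊥
  | 0 => ⟨PUnit, inferInstance, fun _ => 1, fun x => ⟨fun _ => x, by simp⟩⟩
  | Λ + 1 => (frobFiniteMod_bot_of_fFinite h Λ).add
      ((frobFiniteMod_of_fFinite h).of_isNilpotent (IsNoetherianRing.isNilpotent_nilradical R))

end FrobFiniteMod

section Lift

variable {p Λ E : ℕ} {R : Type u} {S : Type*} [CommRing R] [CommRing S] [Algebra R S]
  [ExpChar R p] {ι : Type*} [Fintype ι]

theorem exists_isFrobLinear_frobSum_eq {b : ι → R} (hb : ∀ x, ∃ u : ι → R, frobSum p Λ u b = x)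
    {y : ι → S} (hy : ∀ u : ι → R, frobSum p Λ u b = 0 → frobSum p E u y = 0) :
    ∃ χ : R →+ S, IsFrobLinear p Λ E χ ∧ ∀ u : ι → R, χ (frobSum p Λ u b) = frobSum p E u y := by
  let π : (ι → R) →ₗ[R] FrobM p Λ R R := Fintype.linearCombination R b
  let Y : (ι → R) →ₗ[R] FrobM p E R S := Fintype.linearCombination R y
  have hπ : ∀ u, π u = frobSum p Λ u b := linearCombination_frobM_apply b
  have hπsurj : Function.Surjective π := fun x => (hb x).imp fun u hu => (hπ u).trans hu
  have hker : LinearMap.ker π ≤ LinearMap.ker Y := fun u hu =>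
    (linearCombination_frobM_apply y u).trans (hy u ((hπ u).symm.trans hu))
  let χ : FrobM p Λ R R →ₗ[R] FrobM p E R S :=
    (LinearMap.ker π).liftQ Y hker ∘ₗ (π.quotKerEquivOfSurjective hπsurj).symm.toLinearMap
  have hχ : ∀ u, χ (π u) = Y u := fun u => by
    simp [χ, LinearMap.quotKerEquivOfSurjective_symm_apply]
  refine ⟨χ.toAddMonoidHom,
    fun r' r => (χ.map_smul r' r).trans (frobM_smul_def (S := S) r' (χ r)), fun u => ?_⟩
  rw [← hπ, ← linearCombination_frobM_apply]
  exact hχ u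

theorem exists_frobSum_mul_eq_zero [IsNoetherianRing R] {T : Type*} [CommRing T] [Algebra S T]
    (σ : Submonoid S) [IsLocalization σ T] (b : ι → R) (y : ι → S)
    (h : ∀ u : ι → R, frobSum p Λ u b = 0 → algebraMap S T (frobSum p E u y) = 0) :
    ∃ s : σ, ∀ u : ι → R, frobSum p Λ u b = 0 → frobSum p E u (fun j => s * y j) = 0 := by
  let π : (ι → R) →ₗ[R] FrobM p Λ R R := Fintype.linearCombination R b
  have hπ : ∀ u, π u = frobSum p Λ u b := linearCombination_frobM_apply b
  obtain ⟨V, hV⟩ := IsNoetherian.noetherian (LinearMap.ker π)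
  have hV' : ∀ v : V, frobSum p Λ v.1 b = 0 := fun v =>
    (hπ v).symm.trans (hV ▸ Submodule.subset_span v.2 : v.1 ∈ LinearMap.ker π)
  choose t ht using fun v : V => (IsLocalization.map_eq_zero_iff σ T _).mp (h v (hV' v))
  set s : σ := ∏ v, t v
  refine ⟨s, fun u hu => ?_⟩
  suffices LinearMap.ker π ≤
      LinearMap.ker (Fintype.linearCombination R (M := FrobM p E R S) fun j => (s : S) * y j) by
    rw [← linearCombination_frobM_apply]
    exact this ((hπ u).trans hu)
  rw [← hV, Submodule.span_le]
  intro v hv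
  obtain ⟨k, hk⟩ : (t ⟨v, hv⟩ : S) ∣ s := by
    rw [Submonoid.coe_finsetProd]
    exact Finset.dvd_prod_of_mem _ (Finset.mem_univ _)
  rw [SetLike.mem_coe, LinearMap.mem_ker, linearCombination_frobM_apply, frobSum_mul_left, hk,
    mul_right_comm, ht, zero_mul]
  rfl

theorem IsFrobLinear.exists_lift_of_isLocalization [IsNoetherianRing R] {T : Type*} [CommRing T]
    [Algebra S T] [Algebra R T] [IsScalarTower R S T] (σ : Submonoid S) [IsLocalization σ T]
    (hR : FrobFiniteMod p Λ R ⊥) {Φ : R →+ T} (hΦ : IsFrobLinear p Λ E Φ) :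
    ∃ (χ : R →+ S) (s : σ), IsFrobLinear p Λ E χ ∧
      ∀ r, algebraMap S T (χ r) = algebraMap S T s * Φ r := by
  obtain ⟨ι, _, b, hb⟩ := hR
  simp only [Submodule.mem_bot, sub_eq_zero] at hb
  have hb' : ∀ x, ∃ u : ι → R, frobSum p Λ u b = x := fun x =>
    (hb x).imp fun u hu => by simp [frobSum, hu]
  obtain ⟨s₁, hs₁⟩ := IsLocalization.exist_integer_multiples_of_finite σ fun j => Φ (b j)
  choose y hy using hs₁
  have hyΦ : ∀ u : ι → R,
      algebraMap S T (frobSum p E u y) = algebraMap S T s₁ * Φ (frobSum p Λ u b) := fun u => by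
    rw [hΦ.map_frobSum]
    simp only [frobSum, map_sum, map_mul, map_pow, hy, Algebra.smul_def,
      ← IsScalarTower.algebraMap_apply, Finset.mul_sum]
    exact Finset.sum_congr rfl fun j _ => by ring
  obtain ⟨s₂, hs₂⟩ := exists_frobSum_mul_eq_zero σ b y fun u hu => by
    rw [hyΦ, hu, map_zero, mul_zero]
  obtain ⟨χ, hχ, hχb⟩ := exists_isFrobLinear_frobSum_eq hb' hs₂
  refine ⟨χ, s₂ * s₁, hχ, fun r => ?_⟩
  obtain ⟨u, rfl⟩ := hb' r
  rw [hχb, frobSum_mul_left, map_mul, hyΦ, Submonoid.coe_mul, map_mul, mul_assoc]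

end Lift

theorem exists_isFrobLinear_fractionRing_eq_one {p : ℕ} [Fact p.Prime] {R : Type u} [CommRing R]
    [IsNoetherianRing R] [CharP R p] (𝔭 : Ideal R) [𝔭.IsPrime] {c : R} (hc : c ∈ RCirc R) :
    ∃ (Λ : ℕ) (Φ : R →+ FractionRing (R ⧸ 𝔭)), IsFrobLinear p Λ 0 Φ ∧ Φ c = 1 := by
  obtain ⟨n, hn⟩ := exists_mul_notMem_pow_of_mem_rCirc 𝔭 hc
  obtain ⟨Λ, hΛ⟩ : ∃ Λ, n ≤ p ^ Λ := ⟨n, (Nat.lt_pow_self (Fact.out : p.Prime).one_lt).le⟩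
  set 𝔞 : Ideal R := Ideal.span ((· ^ p ^ Λ) '' 𝔭)
  have h𝔞 : 𝔞 ≤ 𝔭 ^ n := Ideal.span_le.mpr <| by
    rintro _ ⟨π, hπ, rfl⟩
    exact Ideal.pow_le_pow_right hΛ (Ideal.pow_mem_pow hπ _)
  let θ : R ⧸ 𝔭 →+* R ⧸ 𝔞 :=
    Ideal.Quotient.lift 𝔭 ((Ideal.Quotient.mk 𝔞).comp (iterateFrobenius R p Λ)) fun π hπ =>
      Ideal.Quotient.eq_zero_iff_mem.mpr (Ideal.subset_span ⟨π, hπ, rfl⟩)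
  -- `R ⧸ 𝔞` is `{}^Λ R ⊗_R R ⧸ 𝔭`, a module over `R ⧸ 𝔭` through `θ`.
  let : Module (R ⧸ 𝔭) (R ⧸ 𝔞) := Module.compHom _ θ
  have hsmul : ∀ r x : R, Ideal.Quotient.mk 𝔭 r • Ideal.Quotient.mk 𝔞 x
      = Ideal.Quotient.mk 𝔞 (r ^ p ^ Λ * x) := fun r x => rfl
  have hω : ∀ d : R ⧸ 𝔭, d ≠ 0 → d • Ideal.Quotient.mk 𝔞 c ≠ 0 := by
    rintro d hd hdc
    obtain ⟨t, rfl⟩ := Ideal.Quotient.mk_surjective d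
    have ht : t ^ p ^ Λ ∉ 𝔭 := fun h =>
      hd (Ideal.Quotient.eq_zero_iff_mem.mpr (‹𝔭.IsPrime›.mem_of_pow_mem _ h))
    rw [hsmul, Ideal.Quotient.eq_zero_iff_mem] at hdc
    exact hn _ ht (h𝔞 hdc)
  obtain ⟨φ, hφ⟩ := exists_linearMap_fractionRing_eq_one hω
  refine ⟨Λ, φ.toAddMonoidHom.comp (Ideal.Quotient.mk 𝔞).toAddMonoidHom, fun r' r => ?_, hφ⟩
  simp only [AddMonoidHom.coe_comp, Function.comp_apply, RingHom.toAddMonoidHom_eq_coe,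
    AddMonoidHom.coe_coe, LinearMap.toAddMonoidHom_coe, pow_zero, pow_one]
  rw [← hsmul, map_smul, Algebra.smul_def, IsScalarTower.algebraMap_apply R (R ⧸ 𝔭)]
  rfl

theorem exists_ringHom_fractionRing_quotient_comap {p : ℕ} [Fact p.Prime] {R : Type u}
    {S : Type v} [CommRing R] [CommRing S] [Algebra R S] [IsNoetherianRing S] [CharP S p]
    {Q : Ideal S} [Q.IsPrime] (hQ : Q ∈ minimalPrimes S) :
    ∃ (E : ℕ) (θ : FractionRing (R ⧸ Q.comap (algebraMap R S)) →+* Localization.AtPrime Q),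
      ∀ r, θ (algebraMap R _ r) = algebraMap R _ r ^ p ^ E := by
  set 𝔭 := Q.comap (algebraMap R S)
  obtain ⟨N, hN⟩ := exists_pow_eq_zero_of_mem_minimalPrimes hQ
  obtain ⟨E, hE⟩ : ∃ E, N ≤ p ^ E := ⟨N, (Nat.lt_pow_self (Fact.out : p.Prime).one_lt).le⟩
  let θ₀ : R →+* Localization.AtPrime Q :=
    (algebraMap S _).comp ((iterateFrobenius S p E).comp (algebraMap R S))
  have hθ₀ : ∀ r, θ₀ r = algebraMap R (Localization.AtPrime Q) r ^ p ^ E := fun r => by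
    simp [θ₀, iterateFrobenius_def, IsScalarTower.algebraMap_apply R S (Localization.AtPrime Q)]
  let θ₁ : R ⧸ 𝔭 →+* Localization.AtPrime Q := Ideal.Quotient.lift 𝔭 θ₀ fun r hr => by
    rw [hθ₀, IsScalarTower.algebraMap_apply R S]
    exact pow_eq_zero_of_le hE (hN _ hr)
  have hθ₁ : ∀ d : nonZeroDivisors (R ⧸ 𝔭), IsUnit (θ₁ d) := by
    rintro ⟨d, hd⟩
    obtain ⟨t, rfl⟩ := Ideal.Quotient.mk_surjective d
    have ht : algebraMap R S t ∉ Q := fun h =>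
      nonZeroDivisors.ne_zero hd (Ideal.Quotient.eq_zero_iff_mem.mpr h)
    simpa [θ₁, hθ₀, IsScalarTower.algebraMap_apply R S (Localization.AtPrime Q)] using
      (IsLocalization.map_units _ (⟨_, ht⟩ : Q.primeCompl)).pow (p ^ E)
  refine ⟨E, IsLocalization.lift hθ₁, fun r => ?_⟩
  rw [IsScalarTower.algebraMap_apply R (R ⧸ 𝔭), IsLocalization.lift_eq]
  exact hθ₀ r

theorem exists_isFrobLinear_notMem_of_mem_minimalPrimes {p : ℕ} [Fact p.Prime] {R : Type u}
    {S : Type v} [CommRing R] [CommRing S] [Algebra R S] [IsNoetherianRing R] [IsNoetherianRing S]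
    [CharP R p] [CharP S p] (hR : ∀ Λ, FrobFiniteMod p Λ R ⊥) {c : R} (hc : c ∈ RCirc R)
    {Q : Ideal S} (hQ : Q ∈ minimalPrimes S) :
    ∃ (Λ E : ℕ) (χ : R →+ S), IsFrobLinear p Λ E χ ∧ χ c ∉ Q := by
  have := hQ.1.1
  obtain ⟨Λ, Φ, hΦ, hΦc⟩ := exists_isFrobLinear_fractionRing_eq_one (Q.comap (algebraMap R S)) hc
  obtain ⟨E, θ, hθ⟩ := exists_ringHom_fractionRing_quotient_comap (R := R) (p := p) hQ
  obtain ⟨χ, s, hχ, hχΦ⟩ :=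
    (hΦ.ringHom_comp θ hθ).exists_lift_of_isLocalization Q.primeCompl (hR Λ)
  refine ⟨Λ, E + 0, χ, hχ, fun hχc => ?_⟩
  have hunit : IsUnit (algebraMap S (Localization.AtPrime Q) (χ c)) := by
    simpa [hχΦ, hΦc] using IsLocalization.map_units _ s
  exact (IsLocalRing.mem_maximalIdeal _).mp
    ((IsLocalization.AtPrime.to_map_mem_maximal_iff _ Q _).mpr hχc) hunit

theorem exists_isFrobLinear_mem_rCirc_of_forall_minimalPrimes {p : ℕ} {R : Type u} {S : Type v}
    [CommRing R] [CommRing S] [Algebra R S] [IsNoetherianRing S] [ExpChar S p]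
    {c : R} (h : ∀ Q ∈ minimalPrimes S, ∃ (Λ E : ℕ) (χ : R →+ S), IsFrobLinear p Λ E χ ∧ χ c ∉ Q)
    (Λ₀ : ℕ) : ∃ (Λ E : ℕ) (ψ : R →+ S), Λ₀ ≤ Λ ∧ IsFrobLinear p Λ E ψ ∧ ψ c ∈ RCirc S := by
  classical
  let := (minimalPrimes.finite_of_isNoetherianRing S).fintype
  choose Λ E χ hχ hχc using fun Q : minimalPrimes S => h Q Q.2
  choose u hu hu' using fun Q : minimalPrimes S => exists_notMem_forall_mem_of_mem_minimalPrimes Q.2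
  set Λ' := Λ₀ + ∑ Q, Λ Q
  set E' := ∑ Q, E Q + Λ'
  have hle : ∀ Q, Λ Q ≤ Λ' ∧ E Q + (Λ' - Λ Q) ≤ E' := fun Q => by
    have := Finset.single_le_sum (fun Q _ => Nat.zero_le (Λ Q)) (Finset.mem_univ Q)
    have := Finset.single_le_sum (fun Q _ => Nat.zero_le (E Q)) (Finset.mem_univ Q)
    omega
  choose k hk using fun Q => (hχ Q).exists_frobenius_comp (hle Q).1 (hle Q).2
  set χ' := fun Q => (iterateFrobenius S p (k Q) : S →+ S).comp (χ Q)
  have hχ'c : ∀ Q, χ' Q c ∉ Q.1 := fun Q h => hχc Q (Q.2.1.1.mem_of_pow_mem _ h)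
  refine ⟨Λ', E', ∑ Q, (AddMonoidHom.mulLeft (u Q)).comp (χ' Q), by omega,
    IsFrobLinear.sum _ fun Q _ => (hk Q).mulLeft (u Q), fun P hP hmem => ?_⟩
  set P' : minimalPrimes S := ⟨P, hP⟩
  rw [AddMonoidHom.finsetSum_apply, ← Finset.add_sum_erase _ _ (Finset.mem_univ P')] at hmem
  have hrest : ∑ Q ∈ Finset.univ.erase P', u Q * χ' Q c ∈ P :=
    Ideal.sum_mem _ fun Q hQ => P.mul_mem_right _
      (hu' Q P hP fun hPQ => Finset.ne_of_mem_erase hQ (Subtype.ext hPQ.symm))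
  rcases hP.1.1.mem_or_mem ((Submodule.add_mem_iff_left _ hrest).mp hmem) with h | h
  · exact hu P' h
  · exact hχ'c P' h

theorem interior_transforms_under_extensions_general
    (p : ℕ) [Fact p.Prime] (R : Type u) (S : Type v) [CommRing R] [CommRing S] [Algebra R S]
    [IsNoetherianRing R] [IsNoetherianRing S] [CharP R p] [CharP S p]
    (hffR : FFinite p (R ⧸ nilradical R))
    (M : Type w) [AddCommGroup M] [Module S M] (L : Type*) [AddCommGroup L] [Module R L]
    (e : ℕ) (g : M →+ L) (hg : IsFrobSemilinearAlg p e R S M L g) :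
    ∀ x ∈ tightInterior p S M, g x ∈ tightInterior p R L := by
  intro x hx
  simp only [tightInterior, Submodule.mem_iInf] at hx ⊢
  intro c hc e₀
  obtain ⟨Λ, E, ψ, hΛ, hψ, hψc⟩ := exists_isFrobLinear_mem_rCirc_of_forall_minimalPrimes (S := S)
    (fun Q hQ => exists_isFrobLinear_notMem_of_mem_minimalPrimes
      (frobFiniteMod_bot_of_fFinite hffR) hc hQ) e₀
  exact map_mem_tiAux_of_isFrobLinear hg hψ hΛ (by omega) (hx _ hψc (E - e))

/-- Proposition 6.5: for `R → S`, an `S`-module `M` and an `R`-module `L`,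
`Σ_{e, φ} φ({}^e (M_{*S})) ⊆ L_{*R}`. -/
theorem interior_transforms_under_extensions
    (p : ℕ) [Fact p.Prime] (R : Type u) (S : Type v) [CommRing R] [CommRing S] [Algebra R S]
    [IsNoetherianRing R] [IsNoetherianRing S] [CharP R p] [CharP S p]
    (hffR : FFinite p (R ⧸ nilradical R)) (hffS : FFinite p (S ⧸ nilradical S))
    (M : Type w) [AddCommGroup M] [Module S M] (L : Type*) [AddCommGroup L] [Module R L]
    (e : ℕ) (g : M →+ L) (hg : IsFrobSemilinearAlg p e R S M L g) :
    ∀ x ∈ tightInterior p S M, g x ∈ tightInterior p R L :=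
  interior_transforms_under_extensions_general p R S hffR M L e g hg
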